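/- (Existence of a pure strategy Nash equilibrium.) There exists a strategy profile a* : M → Bool such that for every player i ∈ M, q_i(a*) ≥ q_i(flip_i a*); i.e., the repercussion-utility game admits a pure strategy Nash equilibrium. -/

import Mathlib

/-! The repercussion game is an exact potential game whose potential is the social welfare
`∑ k, U k a`: flipping `i` changes the welfare only through the utilities of `i` and of its
neighbours, which is precisely the change of `q i`. A welfare-maximising profile is therefore a
pure Nash equilibrium. -/

/-- Flip the action of player `i` in profile `a`. -/
def flipProfile {M : Type*} [DecidableEq M] (i : M) (a : M → Bool) : M → Bool :=
  Function.update a i (!a i)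

/-- Repercussion utility of player `i`. -/
noncomputable def repUtil {M : Type*} [DecidableEq M] (N : M → Finset M)
    (U : M → (M → Bool) → ℝ) (i : M) (a : M → Bool) : ℝ :=
  if a i then U i a + ∑ j ∈ N i, (U j a - U j (flipProfile i a)) else U i a

section Flip

variable {M : Type*} [DecidableEq M]

@[simp]
lemma flipProfile_self (i : M) (a : M → Bool) : flipProfile i a i = !a i := by
  simp [flipProfile]

lemma flipProfile_of_ne {i j : M} (h : j ≠ i) (a : M → Bool) : flipProfile i a j = a j :=
  Function.update_of_ne h _ a

@[simp]
lemma flipProfile_flipProfile (i : M) (a : M → Bool) : flipProfile i (flipProfile i a) = a := by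
  simp [flipProfile]

end Flip

section Potential

variable {M : Type*} [DecidableEq M] (N : M → Finset M) (U : M → (M → Bool) → ℝ)

def socialWelfare [Fintype M] (a : M → Bool) : ℝ :=
  ∑ k, U k a

lemma repUtil_sub_repUtil_flipProfile (i : M) (a : M → Bool) (hi : i ∉ N i) :
    repUtil N U i a - repUtil N U i (flipProfile i a) =
      ∑ j ∈ insert i (N i), (U j a - U j (flipProfile i a)) := by
  rw [Finset.sum_insert hi]
  cases ha : a i <;>
    simp only [repUtil, ha, flipProfile_self, flipProfile_flipProfile, Bool.not_false,
      Bool.not_true, Bool.false_eq_true, if_true, if_false, Finset.sum_sub_distrib] <;>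
    ring

lemma utility_flipProfile_of_notMem
    (hsym : ∀ i j, j ∈ N i ↔ i ∈ N j)
    (hloc : ∀ i (a a' : M → Bool), (∀ j, j = i ∨ j ∈ N i → a j = a' j) → U i a = U i a')
    {i k : M} (hk : k ∉ insert i (N i)) (a : M → Bool) :
    U k (flipProfile i a) = U k a := by
  rw [Finset.mem_insert, not_or] at hk
  refine hloc k _ _ fun j hj => flipProfile_of_ne ?_ a
  rintro rfl
  rcases hj with rfl | hj
  · exact hk.1 rfl
  · exact hk.2 ((hsym k j).mp hj)

lemma socialWelfare_sub_socialWelfare_flipProfile [Fintype M]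
    (hsym : ∀ i j, j ∈ N i ↔ i ∈ N j)
    (hloc : ∀ i (a a' : M → Bool), (∀ j, j = i ∨ j ∈ N i → a j = a' j) → U i a = U i a')
    (i : M) (a : M → Bool) :
    socialWelfare U a - socialWelfare U (flipProfile i a) =
      ∑ j ∈ insert i (N i), (U j a - U j (flipProfile i a)) := by
  rw [socialWelfare, socialWelfare, ← Finset.sum_sub_distrib]
  refine (Finset.sum_subset (Finset.subset_univ _) fun k _ hk => ?_).symm
  rw [utility_flipProfile_of_notMem N U hsym hloc hk, sub_self]

lemma repUtil_sub_repUtil_flipProfile_eq_socialWelfare [Fintype M]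
    (hself : ∀ i, i ∉ N i)
    (hsym : ∀ i j, j ∈ N i ↔ i ∈ N j)
    (hloc : ∀ i (a a' : M → Bool), (∀ j, j = i ∨ j ∈ N i → a j = a' j) → U i a = U i a')
    (i : M) (a : M → Bool) :
    repUtil N U i a - repUtil N U i (flipProfile i a) =
      socialWelfare U a - socialWelfare U (flipProfile i a) := by
  rw [repUtil_sub_repUtil_flipProfile N U i a (hself i),
    socialWelfare_sub_socialWelfare_flipProfile N U hsym hloc]

end Potential

theorem exists_pure_nash_equilibrium_general
    {M : Type*} [Fintype M] [DecidableEq M]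
    (N : M → Finset M) (U : M → (M → Bool) → ℝ)
    (hself : ∀ i, i ∉ N i)
    (hsym : ∀ i j, j ∈ N i ↔ i ∈ N j)
    (hloc : ∀ i (a a' : M → Bool),
      (∀ j, j = i ∨ j ∈ N i → a j = a' j) → U i a = U i a') :
    ∃ astar : M → Bool, ∀ i : M,
      repUtil N U i astar ≥ repUtil N U i (flipProfile i astar) := by
  obtain ⟨astar, hmax⟩ := Finite.exists_max (socialWelfare U)
  refine ⟨astar, fun i => ?_⟩
  have hpot := repUtil_sub_repUtil_flipProfile_eq_socialWelfare N U hself hsym hloc i astar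
  have hle := hmax (flipProfile i astar)
  linarith

/-- The repercussion-utility game admits a pure strategy Nash equilibrium: a
profile `a*` from which no player can strictly improve its repercussion utility
by unilaterally flipping its action. -/
theorem exists_pure_nash_equilibrium
    {M : Type*} [Fintype M] [DecidableEq M] [Nonempty M]
    (N : M → Finset M) (U : M → (M → Bool) → ℝ)
    (hself : ∀ i, i ∉ N i)
    (hsym : ∀ i j, j ∈ N i ↔ i ∈ N j)
    (hloc : ∀ i (a a' : M → Bool),
      (∀ j, j = i ∨ j ∈ N i → a j = a' j) → U i a = U i a') :
    ∃ astar : M → Bool, ∀ i : M,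
      repUtil N U i astar ≥ repUtil N U i (flipProfile i astar) :=
  exists_pure_nash_equilibrium_general N U hself hsym hloc
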